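/- Let X be a DG B^e-module with XJ = 0 (i.e., X is a DG B-module via B ≅ B^e/J). Then there is an isomorphism Der_A(B, X) ≅ Hom_B(Ω, X) of topological DG B-modules, where Ω = J/J². -/

import Mathlib

/- ------------------------------------------------------------------
A self-contained framework for differential graded (DG) homological
algebra, following Nasseh–Ono–Yoshino, "Connections and naïve lifting
of DG modules".
------------------------------------------------------------------ -/

noncomputable section

namespace DG

universe u

/-- The sign `(-1)^n` for `n : ℤ`. -/
def sgn (n : ℤ) : ℤ := ((-1 : ℤˣ) ^ n : ℤˣ)

/-- A (non-negatively graded, strictly graded-commutative) DG `R`-algebra: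
a graded `R`-algebra `A = ⊕_{n ≥ 0} A_n` with `ab = (-1)^{|a||b|} ba`,
`a² = 0` for `|a|` odd, and a degree `-1` differential `d` with `d ∘ d = 0`
satisfying the Leibniz rule. -/
structure DGAlg (R : Type u) [CommRing R] : Type (u + 1) where
  carrier : Type u
  [ring : Ring carrier]
  [alg : Algebra R carrier]
  gr : ℤ → Submodule R carrier
  internal : DirectSum.IsInternal gr
  nonneg : ∀ i : ℤ, i < 0 → gr i = ⊥
  one_mem : (1 : carrier) ∈ gr 0
  mul_mem : ∀ {i j : ℤ} {a b : carrier}, a ∈ gr i → b ∈ gr j → a * b ∈ gr (i + j)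
  gcomm : ∀ {i j : ℤ} {a b : carrier}, a ∈ gr i → b ∈ gr j → a * b = sgn (i * j) • (b * a)
  sq_zero : ∀ {i : ℤ} {a : carrier}, a ∈ gr i → Odd i → a * a = 0
  d : carrier →ₗ[R] carrier
  d_mem : ∀ {i : ℤ} {a : carrier}, a ∈ gr i → d a ∈ gr (i - 1)
  d_d : ∀ a : carrier, d (d a) = 0
  leibniz : ∀ {i : ℤ} {a : carrier} (b : carrier), a ∈ gr i →
    d (a * b) = d a * b + sgn i • (a * d b)

attribute [instance] DGAlg.ring DGAlg.alg

variable {R : Type u} [CommRing R]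

/-- A right DG module over a DG `R`-algebra `S`. -/
structure DGMod (S : DGAlg R) : Type (u + 1) where
  carrier : Type u
  [acg : AddCommGroup carrier]
  [mod : Module R carrier]
  /-- the right `S`-action -/
  smul : carrier → S.carrier → carrier
  smul_add : ∀ (m : carrier) (a b : S.carrier), smul m (a + b) = smul m a + smul m b
  add_smul : ∀ (m n : carrier) (a : S.carrier), smul (m + n) a = smul m a + smul n a
  smul_rsmul : ∀ (r : R) (m : carrier) (a : S.carrier), smul (r • m) a = r • smul m a
  smul_one : ∀ m : carrier, smul m 1 = m
  smul_mul : ∀ (m : carrier) (a b : S.carrier), smul m (a * b) = smul (smul m a) b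
  smul_algebraMap : ∀ (r : R) (m : carrier), smul m (algebraMap R S.carrier r) = r • m
  gr : ℤ → Submodule R carrier
  internal : DirectSum.IsInternal gr
  smul_mem : ∀ {i j : ℤ} {m : carrier} {a : S.carrier},
    m ∈ gr i → a ∈ S.gr j → smul m a ∈ gr (i + j)
  d : carrier →ₗ[R] carrier
  d_mem : ∀ {i : ℤ} {m : carrier}, m ∈ gr i → d m ∈ gr (i - 1)
  d_d : ∀ m : carrier, d (d m) = 0
  leibniz : ∀ {i : ℤ} {m : carrier} (a : S.carrier), m ∈ gr i →
    d (smul m a) = smul (d m) a + sgn i • smul m (S.d a)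

attribute [instance] DGMod.acg DGMod.mod

/-- Decomposition of a DG algebra into its homogeneous components. -/
noncomputable def DGAlg.dec (S : DGAlg R) : S.carrier ≃ DirectSum ℤ (fun i => S.gr i) :=
  (Equiv.ofBijective _ S.internal).symm

/-- Decomposition of a DG module into its homogeneous components. -/
noncomputable def DGMod.dec {S : DGAlg R} (M : DGMod S) :
    M.carrier ≃ DirectSum ℤ (fun i => M.gr i) :=
  (Equiv.ofBijective _ M.internal).symm

/-- The left action `a • x := (-1)^{|a||x|} x a` on a right DG module over the
strictly graded-commutative DG algebra `S`, extended bilinearly. -/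
noncomputable def DGMod.lsmul {S : DGAlg R} (M : DGMod S) (a : S.carrier) (x : M.carrier) :
    M.carrier :=
  (DFinsupp.sumAddHom (fun i => AddMonoidHom.mk'
    (fun ai : S.gr i => DFinsupp.sumAddHom (fun j => AddMonoidHom.mk'
      (fun xj : M.gr j => sgn (i * j) • M.smul (xj : M.carrier) (ai : S.carrier))
      (by intro x y; simp [M.add_smul, smul_add]))
    )
    (by
      intro ai ai'
      refine DFinsupp.addHom_ext fun j xj => ?_
      simp [DFinsupp.sumAddHom_single, M.smul_add, smul_add]))
    (S.dec a)) (M.dec x)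

/-- `f : M → N` is a graded `S`-linear map of degree `n`. -/
def IsGLin {S : DGAlg R} (M N : DGMod S) (n : ℤ) (f : M.carrier → N.carrier) : Prop :=
  (∀ x y : M.carrier, f (x + y) = f x + f y) ∧
  (∀ (r : R) (x : M.carrier), f (r • x) = r • f x) ∧
  (∀ (x : M.carrier) (a : S.carrier), f (M.smul x a) = N.smul (f x) a) ∧
  (∀ i : ℤ, ∀ x ∈ M.gr i, f x ∈ N.gr (i + n))

/-- `f` belongs to `Hom_S(M,N) = ⊕_{n ∈ ℤ} Hom_{gr(S)}(M, N(n))`, i.e. `f` is a finite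
sum of homogeneous graded `S`-linear maps. -/
def InSHom {S : DGAlg R} (M N : DGMod S) (f : M.carrier → N.carrier) : Prop :=
  ∃ (s : Finset ℤ) (g : ℤ → M.carrier → N.carrier),
    (∀ n ∈ s, IsGLin M N n (g n)) ∧ ∀ x, f x = ∑ n ∈ s, g n x

/-- A homomorphism of DG `R`-algebras. -/
structure DGHom (S T : DGAlg R) : Type u where
  toFun : S.carrier → T.carrier
  map_one : toFun 1 = 1
  map_mul : ∀ a b, toFun (a * b) = toFun a * toFun b
  map_add : ∀ a b, toFun (a + b) = toFun a + toFun b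
  map_algebraMap : ∀ r : R, toFun (algebraMap R S.carrier r) = algebraMap R T.carrier r
  map_gr : ∀ {i : ℤ} {a : S.carrier}, a ∈ S.gr i → toFun a ∈ T.gr i
  map_d : ∀ a, toFun (S.d a) = T.d (toFun a)

/-- The underlying ring homomorphism of a DG algebra homomorphism. -/
def DGHom.toRingHom {S T : DGAlg R} (f : DGHom S T) : S.carrier →+* T.carrier where
  toFun := f.toFun
  map_one' := f.map_one
  map_mul' := f.map_mul
  map_zero' := by
    have h := f.map_add 0 0
    rw [add_zero] at h
    exact (add_eq_left.mp h.symm)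
  map_add' := f.map_add

/-- The basic setup of the paper: a DG `R`-algebra homomorphism `φ : A → B` with `B`
projective as an underlying (graded) `A`-module, together with the enveloping DG algebra
`E = Bᵉ = B ⊗_A B` (axiomatized by its structure maps `inl : b ↦ b ⊗ 1`,
`inr : b ↦ 1 ⊗ b`, the multiplication map `mulB = π_B : Bᵉ → B` and the universal
property of the tensor product), the diagonal ideal `J = ker π_B` (a DG `Bᵉ`-module
with structure monomorphism `ιJ`), and the universal derivation
`δ : B → J`, `δ(b) = b ⊗ 1 - 1 ⊗ b`. -/
structure EnvSetup (R : Type u) [CommRing R] : Type (u + 1) where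
  A : DGAlg R
  B : DGAlg R
  φ : DGHom A B
  projB :
    letI : Module A.carrier B.carrier := Module.compHom B.carrier φ.toRingHom
    Module.Projective A.carrier B.carrier
  E : DGAlg R
  inl : DGHom B E
  inr : DGHom B E
  inl_inr_phi : ∀ a : A.carrier, inl.toFun (φ.toFun a) = inr.toFun (φ.toFun a)
  mulB : DGHom E B
  mulB_inl : ∀ b, mulB.toFun (inl.toFun b) = b
  mulB_inr : ∀ b, mulB.toFun (inr.toFun b) = b
  span : ∀ x : E.carrier,
    x ∈ Submodule.span R {y : E.carrier | ∃ b b', y = inl.toFun b * inr.toFun b'}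
  univ : ∀ (Q : Type u) [AddCommGroup Q] [Module R Q] (h : B.carrier → B.carrier → Q),
    (∀ b₁ b₂ b', h (b₁ + b₂) b' = h b₁ b' + h b₂ b') →
    (∀ b b₁ b₂, h b (b₁ + b₂) = h b b₁ + h b b₂) →
    (∀ (r : R) b b', h (r • b) b' = r • h b b') →
    (∀ (r : R) b b', h b (r • b') = r • h b b') →
    (∀ (a : A.carrier) (b b' : B.carrier), h (b * φ.toFun a) b' = h b (φ.toFun a * b')) →
    ∃! H : E.carrier →ₗ[R] Q, ∀ b b', H (inl.toFun b * inr.toFun b') = h b b'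
  J : DGMod E
  ιJ : J.carrier → E.carrier
  ιJ_add : ∀ x y, ιJ (x + y) = ιJ x + ιJ y
  ιJ_rsmul : ∀ (r : R) x, ιJ (r • x) = r • ιJ x
  ιJ_smul : ∀ x e, ιJ (J.smul x e) = ιJ x * e
  ιJ_gr : ∀ (i : ℤ) (x : J.carrier), x ∈ J.gr i ↔ ιJ x ∈ E.gr i
  ιJ_d : ∀ x, ιJ (J.d x) = E.d (ιJ x)
  ιJ_inj : Function.Injective ιJ
  ιJ_range : ∀ e : E.carrier, (∃ x, ιJ x = e) ↔ mulB.toFun e = 0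
  δ : B.carrier → J.carrier
  ιJ_δ : ∀ b, ιJ (δ b) = inl.toFun b - inr.toFun b

/-- `D : B → X` is an `A`-derivation of degree `n` with values in the DG `Bᵉ`-module `X`:
an `A`-linear graded map of degree `n` satisfying the Leibniz rule
`D(bc) = D(b)·(1⊗c) + (-1)^{|b||c|} D(c)·(b⊗1)`
(equivalently, `D(bc) = D(b)c + (-1)^{|D||b|} b D(c)`). -/
def IsDer (P : EnvSetup R) (X : DGMod P.E) (n : ℤ) (D : P.B.carrier → X.carrier) : Prop :=
  (∀ b c, D (b + c) = D b + D c) ∧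
  (∀ (r : R) b, D (r • b) = r • D b) ∧
  (∀ (b : P.B.carrier) (a : P.A.carrier),
    D (b * P.φ.toFun a) = X.smul (D b) (P.inr.toFun (P.φ.toFun a))) ∧
  (∀ i : ℤ, ∀ b ∈ P.B.gr i, D b ∈ X.gr (i + n)) ∧
  (∀ (i j : ℤ) (b c : P.B.carrier), b ∈ P.B.gr i → c ∈ P.B.gr j →
    D (b * c) = X.smul (D b) (P.inr.toFun c) + sgn (i * j) • X.smul (D c) (P.inl.toFun b))

/-- `D` belongs to `Der_A(B,X) = ⊕_{n ∈ ℤ} Der_A(B,X)_n`. -/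
def InSDer (P : EnvSetup R) (X : DGMod P.E) (D : P.B.carrier → X.carrier) : Prop :=
  ∃ (s : Finset ℤ) (g : ℤ → P.B.carrier → X.carrier),
    (∀ n ∈ s, IsDer P X n (g n)) ∧ ∀ b, D b = ∑ n ∈ s, g n b

end DG
/- Part 2 appended to common -/
namespace DG

variable {R : Type u} [CommRing R]

/-- The DG tensor product `N ⊗_B X` of a DG `B`-module `N` and a DG `Bᵉ`-module `X`
(a DG `B`-module via the right `B`-action on `X` through `inr`), axiomatized by its
structure map `t : (n,x) ↦ n ⊗ x`, `B`-balancedness `nb ⊗ x = (-1)^{|b||x|} n ⊗ x·(b⊗1)`,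
spanning, and the universal property. -/
structure TensorBX (P : EnvSetup R) (N : DGMod P.B) (X : DGMod P.E) : Type (u + 1) where
  T : DGMod P.B
  t : N.carrier → X.carrier → T.carrier
  t_addl : ∀ m m' x, t (m + m') x = t m x + t m' x
  t_addr : ∀ m x x', t m (x + x') = t m x + t m x'
  t_rsml : ∀ (r : R) m x, t (r • m) x = r • t m x
  t_rsmr : ∀ (r : R) m x, t m (r • x) = r • t m x
  t_smul : ∀ m x b, t m (X.smul x (P.inr.toFun b)) = T.smul (t m x) b
  t_bal : ∀ {i j : ℤ} (m : N.carrier) (x : X.carrier) (b : P.B.carrier),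
    b ∈ P.B.gr i → x ∈ X.gr j →
    t (N.smul m b) x = sgn (i * j) • t m (X.smul x (P.inl.toFun b))
  t_gr : ∀ {i j : ℤ} {m x}, m ∈ N.gr i → x ∈ X.gr j → t m x ∈ T.gr (i + j)
  t_d : ∀ {i : ℤ} (m x), m ∈ N.gr i → T.d (t m x) = t (N.d m) x + sgn i • t m (X.d x)
  span : ∀ y : T.carrier, y ∈ Submodule.span R {z : T.carrier | ∃ m x, z = t m x}
  univ : ∀ (Q : Type u) [AddCommGroup Q] [Module R Q] (h : N.carrier → X.carrier → Q),
    (∀ m m' x, h (m + m') x = h m x + h m' x) →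
    (∀ m x x', h m (x + x') = h m x + h m x') →
    (∀ (r : R) m x, h (r • m) x = r • h m x) →
    (∀ (r : R) m x, h m (r • x) = r • h m x) →
    (∀ {i j : ℤ} (m x) (b : P.B.carrier), b ∈ P.B.gr i → x ∈ X.gr j →
      h (N.smul m b) x = sgn (i * j) • h m (X.smul x (P.inl.toFun b))) →
    ∃! H : T.carrier →ₗ[R] Q, ∀ m x, H (t m x) = h m x

/-- `ψ : N → N ⊗_B X` is a `D`-connection on `N` along `X` of degree `n = |D|`:
a graded `A`-linear map of degree `n` with
`ψ(xb) = ψ(x)b + (-1)^{|D||x|} x ⊗ D(b)`. -/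
def IsConn {P : EnvSetup R} {N : DGMod P.B} {X : DGMod P.E} (τ : TensorBX P N X)
    (n : ℤ) (D : P.B.carrier → X.carrier) (ψ : N.carrier → τ.T.carrier) : Prop :=
  (∀ x y : N.carrier, ψ (x + y) = ψ x + ψ y) ∧
  (∀ (r : R) (x : N.carrier), ψ (r • x) = r • ψ x) ∧
  (∀ i : ℤ, ∀ x ∈ N.gr i, ψ x ∈ τ.T.gr (i + n)) ∧
  (∀ (i : ℤ) (x : N.carrier) (b : P.B.carrier), x ∈ N.gr i →
    ψ (N.smul x b) = τ.T.smul (ψ x) b + sgn (n * i) • τ.t x (D b))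

/-- `ψ` belongs to `Conn(N, N ⊗_B X) = ⊕_{n ∈ ℤ} Conn(N, N ⊗_B X)_n`. -/
def InSConn {P : EnvSetup R} {N : DGMod P.B} {X : DGMod P.E} (τ : TensorBX P N X)
    (ψ : N.carrier → τ.T.carrier) : Prop :=
  ∃ (s : Finset ℤ) (g : ℤ → N.carrier → τ.T.carrier) (Df : ℤ → P.B.carrier → X.carrier),
    (∀ n ∈ s, IsDer P X n (Df n) ∧ IsConn τ n (Df n) (g n)) ∧ ∀ x, ψ x = ∑ n ∈ s, g n x

/-- An `Der_A(B,X)`-connection on `N` (along the `Bᵉ`-module `X`): a DG `B`-module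
homomorphism `∇ : Der_A(B,X) → Conn(N, N ⊗_B X)` such that `∇_D` is a `D`-connection
for every `D`.  (Equivalently, a DG `B`-module splitting of `ν`.) -/
def IsLConn {P : EnvSetup R} {N : DGMod P.B} {X : DGMod P.E} (τ : TensorBX P N X)
    (Cn : (P.B.carrier → X.carrier) → N.carrier → τ.T.carrier) : Prop :=
  (∀ (n : ℤ) (D), IsDer P X n D → IsConn τ n D (Cn D)) ∧
  (∀ D D', InSDer P X D → InSDer P X D' →
    ∀ x, Cn (fun b => D b + D' b) x = Cn D x + Cn D' x) ∧
  (∀ (r : R) (D), InSDer P X D → ∀ x, Cn (fun b => r • D b) x = r • Cn D x) ∧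
  (∀ (k n : ℤ) (b : P.B.carrier) (D), b ∈ P.B.gr k → IsDer P X n D →
    ∀ x, Cn (fun c => X.lsmul (P.inl.toFun b) (D c)) x = τ.T.lsmul b (Cn D x)) ∧
  (∀ (n : ℤ) (D), IsDer P X n D →
    ∀ x, Cn (fun b => X.d (D b) - sgn n • D (P.B.d b)) x
      = τ.T.d (Cn D x) - sgn n • Cn D (N.d x))

/-- The DG tensor product `N|_A ⊗_A B` (a DG `B`-module through the right factor),
together with the canonical DG `B`-module epimorphism `pr = π_N : N|_A ⊗_A B → N`,
`n ⊗ b ↦ nb`. -/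
structure TensorAB (P : EnvSetup R) (N : DGMod P.B) : Type (u + 1) where
  T : DGMod P.B
  t : N.carrier → P.B.carrier → T.carrier
  t_addl : ∀ m m' b, t (m + m') b = t m b + t m' b
  t_addr : ∀ m b b', t m (b + b') = t m b + t m b'
  t_rsml : ∀ (r : R) m b, t (r • m) b = r • t m b
  t_rsmr : ∀ (r : R) m b, t m (r • b) = r • t m b
  t_smul : ∀ m b b', t m (b * b') = T.smul (t m b) b'
  t_bal : ∀ (m : N.carrier) (a : P.A.carrier) (b : P.B.carrier),
    t (N.smul m (P.φ.toFun a)) b = t m (P.φ.toFun a * b)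
  t_gr : ∀ {i j : ℤ} {m b}, m ∈ N.gr i → b ∈ P.B.gr j → t m b ∈ T.gr (i + j)
  t_d : ∀ {i : ℤ} (m b), m ∈ N.gr i → T.d (t m b) = t (N.d m) b + sgn i • t m (P.B.d b)
  span : ∀ y : T.carrier, y ∈ Submodule.span R {z : T.carrier | ∃ m b, z = t m b}
  univ : ∀ (Q : Type u) [AddCommGroup Q] [Module R Q] (h : N.carrier → P.B.carrier → Q),
    (∀ m m' b, h (m + m') b = h m b + h m' b) →
    (∀ m b b', h m (b + b') = h m b + h m b') →
    (∀ (r : R) m b, h (r • m) b = r • h m b) →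
    (∀ (r : R) m b, h m (r • b) = r • h m b) →
    (∀ (m : N.carrier) (a : P.A.carrier) (b : P.B.carrier),
      h (N.smul m (P.φ.toFun a)) b = h m (P.φ.toFun a * b)) →
    ∃! H : T.carrier →ₗ[R] Q, ∀ m b, H (t m b) = h m b
  pr : T.carrier → N.carrier
  pr_add : ∀ y y', pr (y + y') = pr y + pr y'
  pr_rsmul : ∀ (r : R) y, pr (r • y) = r • pr y
  pr_smul : ∀ y b, pr (T.smul y b) = N.smul (pr y) b
  pr_gr : ∀ {i : ℤ} {y}, y ∈ T.gr i → pr y ∈ N.gr i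
  pr_d : ∀ y, pr (T.d y) = N.d (pr y)
  pr_t : ∀ m b, pr (t m b) = N.smul m b

/-- `N` is naïvely liftable to `A`: the DG `B`-module epimorphism
`π_N : N|_A ⊗_A B → N` has a right inverse in the category of DG `B`-modules. -/
def NaivelyLiftable {P : EnvSetup R} {N : DGMod P.B} (σ : TensorAB P N) : Prop :=
  ∃ ρ : N.carrier → σ.T.carrier, IsGLin N σ.T 0 ρ ∧
    (∀ x, σ.T.d (ρ x) = ρ (N.d x)) ∧ ∀ x, σ.pr (ρ x) = x

end DG
/- Part 3 appended to common -/
namespace DG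

variable {R : Type u} [CommRing R]

/-- A DG `Bᵉ`-module `X` regarded as a DG `B`-module via `inr : B → Bᵉ`
(e.g. when `XJ = 0`, via `B ≅ Bᵉ/J`). -/
def EnvSetup.toBMod (P : EnvSetup R) (X : DGMod P.E) : DGMod P.B where
  carrier := X.carrier
  acg := X.acg
  mod := X.mod
  smul x b := X.smul x (P.inr.toFun b)
  smul_add m a b := by simp only [P.inr.map_add, X.smul_add]
  add_smul m n a := by simp only [X.add_smul]
  smul_rsmul r m a := by simp only [X.smul_rsmul]
  smul_one m := by simp only [P.inr.map_one, X.smul_one]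
  smul_mul m a b := by simp only [P.inr.map_mul, X.smul_mul]
  smul_algebraMap r m := by simp only [P.inr.map_algebraMap, X.smul_algebraMap]
  gr := X.gr
  internal := X.internal
  smul_mem h1 h2 := X.smul_mem h1 (P.inr.map_gr h2)
  d := X.d
  d_mem := X.d_mem
  d_d := X.d_d
  leibniz a h := by
    simp only [P.inr.map_d]
    exact X.leibniz (P.inr.toFun a) h

/-- A DG algebra `S` regarded as a DG module over itself. -/
def DGAlg.toSelfMod (S : DGAlg R) : DGMod S where
  carrier := S.carrier
  smul a b := a * b
  smul_add := mul_add
  add_smul := add_mul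
  smul_rsmul r m a := smul_mul_assoc r m a
  smul_one := mul_one
  smul_mul m a b := (mul_assoc m a b).symm
  smul_algebraMap r m := by rw [Algebra.smul_def, Algebra.commutes]
  gr := S.gr
  internal := S.internal
  smul_mem := S.mul_mem
  d := S.d
  d_mem := S.d_mem
  d_d := S.d_d
  leibniz := S.leibniz

/-- The DG tensor product `N ⊗_B X` of two DG `B`-modules. -/
structure TensorBB (P : EnvSetup R) (N X : DGMod P.B) : Type (u + 1) where
  T : DGMod P.B
  t : N.carrier → X.carrier → T.carrier
  t_addl : ∀ m m' x, t (m + m') x = t m x + t m' x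
  t_addr : ∀ m x x', t m (x + x') = t m x + t m x'
  t_rsml : ∀ (r : R) m x, t (r • m) x = r • t m x
  t_rsmr : ∀ (r : R) m x, t m (r • x) = r • t m x
  t_smul : ∀ m x b, t m (X.smul x b) = T.smul (t m x) b
  t_bal : ∀ {i j : ℤ} (m : N.carrier) (x : X.carrier) (b : P.B.carrier),
    b ∈ P.B.gr i → x ∈ X.gr j →
    t (N.smul m b) x = sgn (i * j) • t m (X.smul x b)
  t_gr : ∀ {i j : ℤ} {m x}, m ∈ N.gr i → x ∈ X.gr j → t m x ∈ T.gr (i + j)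
  t_d : ∀ {i : ℤ} (m x), m ∈ N.gr i → T.d (t m x) = t (N.d m) x + sgn i • t m (X.d x)
  span : ∀ y : T.carrier, y ∈ Submodule.span R {z : T.carrier | ∃ m x, z = t m x}
  univ : ∀ (Q : Type u) [AddCommGroup Q] [Module R Q] (h : N.carrier → X.carrier → Q),
    (∀ m m' x, h (m + m') x = h m x + h m' x) →
    (∀ m x x', h m (x + x') = h m x + h m x') →
    (∀ (r : R) m x, h (r • m) x = r • h m x) →
    (∀ (r : R) m x, h m (r • x) = r • h m x) →
    (∀ {i j : ℤ} (m x) (b : P.B.carrier), b ∈ P.B.gr i → x ∈ X.gr j →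
      h (N.smul m b) x = sgn (i * j) • h m (X.smul x b)) →
    ∃! H : T.carrier →ₗ[R] Q, ∀ m x, H (t m x) = h m x

/-- `D : B → X` is an `A`-derivation of degree `n` with values in the DG `B`-module `X`. -/
def IsDerB (P : EnvSetup R) (X : DGMod P.B) (n : ℤ) (D : P.B.carrier → X.carrier) : Prop :=
  (∀ b c, D (b + c) = D b + D c) ∧
  (∀ (r : R) b, D (r • b) = r • D b) ∧
  (∀ (b : P.B.carrier) (a : P.A.carrier),
    D (b * P.φ.toFun a) = X.smul (D b) (P.φ.toFun a)) ∧
  (∀ i : ℤ, ∀ b ∈ P.B.gr i, D b ∈ X.gr (i + n)) ∧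
  (∀ (i j : ℤ) (b c : P.B.carrier), b ∈ P.B.gr i → c ∈ P.B.gr j →
    D (b * c) = X.smul (D b) c + sgn (i * j) • X.smul (D c) b)

/-- `D` belongs to `Der_A(B,X)` for a DG `B`-module `X`. -/
def InSDerB (P : EnvSetup R) (X : DGMod P.B) (D : P.B.carrier → X.carrier) : Prop :=
  ∃ (s : Finset ℤ) (g : ℤ → P.B.carrier → X.carrier),
    (∀ n ∈ s, IsDerB P X n (g n)) ∧ ∀ b, D b = ∑ n ∈ s, g n b

/-- `ψ : N → N ⊗_B X` is a `D`-connection on `N` along the DG `B`-module `X`. -/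
def IsConnB {P : EnvSetup R} {N X : DGMod P.B} (τ : TensorBB P N X)
    (n : ℤ) (D : P.B.carrier → X.carrier) (ψ : N.carrier → τ.T.carrier) : Prop :=
  (∀ x y : N.carrier, ψ (x + y) = ψ x + ψ y) ∧
  (∀ (r : R) (x : N.carrier), ψ (r • x) = r • ψ x) ∧
  (∀ i : ℤ, ∀ x ∈ N.gr i, ψ x ∈ τ.T.gr (i + n)) ∧
  (∀ (i : ℤ) (x : N.carrier) (b : P.B.carrier), x ∈ N.gr i →
    ψ (N.smul x b) = τ.T.smul (ψ x) b + sgn (n * i) • τ.t x (D b))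

/-- A `Der_A(B,X)`-connection on `N` along a DG `B`-module `X` (equivalently, a DG
`B`-module splitting of `ν : Conn(N, N ⊗_B X) → Der_A(B,X)`). -/
def IsLConnB {P : EnvSetup R} {N X : DGMod P.B} (τ : TensorBB P N X)
    (Cn : (P.B.carrier → X.carrier) → N.carrier → τ.T.carrier) : Prop :=
  (∀ (n : ℤ) (D), IsDerB P X n D → IsConnB τ n D (Cn D)) ∧
  (∀ D D', InSDerB P X D → InSDerB P X D' →
    ∀ x, Cn (fun b => D b + D' b) x = Cn D x + Cn D' x) ∧
  (∀ (r : R) (D), InSDerB P X D → ∀ x, Cn (fun b => r • D b) x = r • Cn D x) ∧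
  (∀ (k n : ℤ) (b : P.B.carrier) (D), b ∈ P.B.gr k → IsDerB P X n D →
    ∀ x, Cn (fun c => X.lsmul b (D c)) x = τ.T.lsmul b (Cn D x)) ∧
  (∀ (n : ℤ) (D), IsDerB P X n D →
    ∀ x, Cn (fun b => X.d (D b) - sgn n • D (P.B.d b)) x
      = τ.T.d (Cn D x) - sgn n • Cn D (N.d x))

/-- `D : B → B` is an `A`-derivation of `B` of degree `n` (an element of
`Der_A(B) = Der_A(B,B)`). -/
def IsDerSelf (P : EnvSetup R) (n : ℤ) (D : P.B.carrier → P.B.carrier) : Prop :=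
  (∀ b c, D (b + c) = D b + D c) ∧
  (∀ (r : R) b, D (r • b) = r • D b) ∧
  (∀ (b : P.B.carrier) (a : P.A.carrier), D (b * P.φ.toFun a) = D b * P.φ.toFun a) ∧
  (∀ i : ℤ, ∀ b ∈ P.B.gr i, D b ∈ P.B.gr (i + n)) ∧
  (∀ (i j : ℤ) (b c : P.B.carrier), b ∈ P.B.gr i → c ∈ P.B.gr j →
    D (b * c) = D b * c + sgn (i * j) • (D c * b))

/-- `D` belongs to `Der_A(B) = ⊕_{n ∈ ℤ} Der_A(B)_n`. -/
def InSDerSelf (P : EnvSetup R) (D : P.B.carrier → P.B.carrier) : Prop :=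
  ∃ (s : Finset ℤ) (g : ℤ → P.B.carrier → P.B.carrier),
    (∀ n ∈ s, IsDerSelf P n (g n)) ∧ ∀ b, D b = ∑ n ∈ s, g n b

/-- `ψ : N → N` is a `D`-connection on `N` along `B` (identifying `N ⊗_B B ≅ N`):
`ψ(xb) = ψ(x)b + (-1)^{|D||x|} x D(b)`. -/
def IsConnSelf (P : EnvSetup R) (N : DGMod P.B) (n : ℤ)
    (D : P.B.carrier → P.B.carrier) (ψ : N.carrier → N.carrier) : Prop :=
  (∀ x y : N.carrier, ψ (x + y) = ψ x + ψ y) ∧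
  (∀ (r : R) (x : N.carrier), ψ (r • x) = r • ψ x) ∧
  (∀ i : ℤ, ∀ x ∈ N.gr i, ψ x ∈ N.gr (i + n)) ∧
  (∀ (i : ℤ) (x : N.carrier) (b : P.B.carrier), x ∈ N.gr i →
    ψ (N.smul x b) = N.smul (ψ x) b + sgn (n * i) • N.smul x (D b))

/-- A `Der_A(B)`-connection on `N` (along `B`). -/
def IsLConnSelf (P : EnvSetup R) (N : DGMod P.B)
    (Cn : (P.B.carrier → P.B.carrier) → N.carrier → N.carrier) : Prop :=
  (∀ (n : ℤ) (D), IsDerSelf P n D → IsConnSelf P N n D (Cn D)) ∧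
  (∀ D D', InSDerSelf P D → InSDerSelf P D' →
    ∀ x, Cn (fun b => D b + D' b) x = Cn D x + Cn D' x) ∧
  (∀ (r : R) (D), InSDerSelf P D → ∀ x, Cn (fun b => r • D b) x = r • Cn D x) ∧
  (∀ (k n : ℤ) (b : P.B.carrier) (D), b ∈ P.B.gr k → IsDerSelf P n D →
    ∀ x, Cn (fun c => b * D c) x = N.lsmul b (Cn D x)) ∧
  (∀ (n : ℤ) (D), IsDerSelf P n D →
    ∀ x, Cn (fun b => P.B.d (D b) - sgn n • D (P.B.d b)) x
      = N.d (Cn D x) - sgn n • Cn D (N.d x))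

/-- The trivial `D`-connection `φ(D)` on a graded-free DG `B`-module `N` with
homogeneous basis `e` (of degrees `deg`), along a DG `Bᵉ`-module `X`:
`φ(D)(Σ e_λ b_λ) = Σ (-1)^{|D||e_λ|} e_λ ⊗ D(b_λ)`. -/
noncomputable def trivConn {P : EnvSetup R} {N : DGMod P.B} {X : DGMod P.E}
    (τ : TensorBX P N X) {ι : Type u} (e : ι → N.carrier) (deg : ι → ℤ)
    (hb : Function.Bijective fun c : ι →₀ P.B.carrier => c.sum fun l b => N.smul (e l) b)
    (n : ℤ) (D : P.B.carrier → X.carrier) : N.carrier → τ.T.carrier :=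
  fun x => ((Equiv.ofBijective _ hb).symm x).sum fun l b => sgn (n * deg l) • τ.t (e l) (D b)

/-- The trivial `D`-connection on a graded-free DG `B`-module `N` along `B`
(identifying `N ⊗_B B ≅ N`). -/
noncomputable def trivConnSelf {P : EnvSetup R} (N : DGMod P.B) {ι : Type u}
    (e : ι → N.carrier) (deg : ι → ℤ)
    (hb : Function.Bijective fun c : ι →₀ P.B.carrier => c.sum fun l b => N.smul (e l) b)
    (n : ℤ) (D : P.B.carrier → P.B.carrier) : N.carrier → N.carrier :=
  fun x => ((Equiv.ofBijective _ hb).symm x).sum fun l b => sgn (n * deg l) • N.smul (e l) (D b)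

/-- The Atiyah homomorphism `α : N → N ⊗_B J(-1)` of a semifree DG `B`-module `N` with
semifree basis `e` and structure coefficients `cf` (`∂(e_λ) = Σ_μ e_μ (cf λ)_μ`):
the `B`-linear map with `α(e_λ) = Σ_μ e_μ ⊗ δ((cf λ)_μ)`. -/
noncomputable def atiyah {P : EnvSetup R} {N : DGMod P.B} (τ : TensorBX P N P.J)
    {ι : Type u} (e : ι → N.carrier)
    (hb : Function.Bijective fun c : ι →₀ P.B.carrier => c.sum fun l b => N.smul (e l) b)
    (cf : ι → ι →₀ P.B.carrier) : N.carrier → τ.T.carrier :=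
  fun x => ((Equiv.ofBijective _ hb).symm x).sum fun l b =>
    τ.T.smul ((cf l).sum fun m b' => τ.t (e m) (P.δ b')) b

/-- The classical Atiyah map `ᾱ : N → N ⊗_B Ω(-1)` (or more generally the analogue of the
Atiyah homomorphism along a DG `B`-module `X` with respect to a derivation-like map
`D0 : B → X`): the `B`-linear map with `ᾱ(e_λ) = Σ_μ e_μ ⊗ D0((cf λ)_μ)`. -/
noncomputable def atiyahB {P : EnvSetup R} {N X : DGMod P.B} (τ : TensorBB P N X)
    {ι : Type u} (e : ι → N.carrier)
    (hb : Function.Bijective fun c : ι →₀ P.B.carrier => c.sum fun l b => N.smul (e l) b)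
    (cf : ι → ι →₀ P.B.carrier) (D0 : P.B.carrier → X.carrier) : N.carrier → τ.T.carrier :=
  fun x => ((Equiv.ofBijective _ hb).symm x).sum fun l b =>
    τ.T.smul ((cf l).sum fun m b' => τ.t (e m) (D0 b')) b

/-- The Kodaira–Spencer homomorphism `κ(D) = [∂^N, φ(D)] - φ([d^B, D])` on a graded-free
DG `B`-module `N` with respect to the homogeneous basis `e`. -/
noncomputable def kappa {P : EnvSetup R} (N : DGMod P.B) {ι : Type u}
    (e : ι → N.carrier) (deg : ι → ℤ)
    (hb : Function.Bijective fun c : ι →₀ P.B.carrier => c.sum fun l b => N.smul (e l) b)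
    (n : ℤ) (D : P.B.carrier → P.B.carrier) : N.carrier → N.carrier :=
  fun x =>
    (N.d (trivConnSelf N e deg hb n D x) - sgn n • trivConnSelf N e deg hb n D (N.d x))
      - trivConnSelf N e deg hb (n - 1) (fun b => P.B.d (D b) - sgn n • D (P.B.d b)) x

/-- The setup of the paper enriched with the differential module
`Ω = Ω_A(B) = J/J²` of `B` over `A`, a DG `B`-module with the natural
projection `pOm : J → Ω` whose kernel is `J²`. -/
structure OmegaSetup (R : Type u) [CommRing R] : Type (u + 1) where
  env : EnvSetup R
  Ω : DGMod env.B
  pOm : env.J.carrier → Ω.carrier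
  pOm_add : ∀ x y, pOm (x + y) = pOm x + pOm y
  pOm_rsmul : ∀ (r : R) x, pOm (r • x) = r • pOm x
  pOm_surj : Function.Surjective pOm
  pOm_gr : ∀ {i : ℤ} {x}, x ∈ env.J.gr i → pOm x ∈ Ω.gr i
  pOm_d : ∀ x, pOm (env.J.d x) = Ω.d (pOm x)
  pOm_smul : ∀ x ee, pOm (env.J.smul x ee) = Ω.smul (pOm x) (env.mulB.toFun ee)
  pOm_ker : ∀ x, pOm x = 0 ↔
    env.ιJ x ∈ Submodule.span R
      {y : env.E.carrier | ∃ u v : env.J.carrier, y = env.ιJ u * env.ιJ v}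

/-- The universal derivation `δ̄ : B → Ω = J/J²` induced by `δ`. -/
def OmegaSetup.δbar (Q : OmegaSetup R) : Q.env.B.carrier → Q.Ω.carrier :=
  fun b => Q.pOm (Q.env.δ b)

end DG



/-! An `A`-derivation `D : B → X` determines the `R`-linear map `H : Bᵉ → X`,
`b ⊗ b' ↦ D(b)(1 ⊗ b')`, and the Leibniz rule together with `XJ = 0` makes `H`
right `Bᵉ`-linear on `J`. Hence `H` kills `J²` and descends to a `B`-linear map
`Ω = J/J² → X` taking `δ̄(b)` to `D(b)`; conversely `g ↦ g ∘ δ̄` turns `B`-linear maps into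
derivations. Since `Ω` is spanned by the elements `δ̄(b)c`, homogeneous of degree
`|b| + |c| ≥ |b|`, the correspondence is injective and matches the degree filtrations of
both sides. -/

section GradedSpan

variable {ι R M : Type*} [DecidableEq ι] [Semiring R] [AddCommMonoid M] [Module R M]
  {gr : ι → Submodule R M}

theorem DirectSum.IsInternal.le_span_of_span_iUnion_eq_top (h : DirectSum.IsInternal gr)
    {S : ι → Set M} (hS : ∀ i, S i ⊆ gr i) (hspan : Submodule.span R (⋃ i, S i) = ⊤)
    (k : ι) : gr k ≤ Submodule.span R (S k) := by
  let π : M →ₗ[R] M := (gr k).subtype ∘ₗ DirectSum.component R ι (fun i => gr i) k ∘ₗ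
    (LinearEquiv.ofBijective (DirectSum.coeLinearMap gr) h).symm.toLinearMap
  have hπ_same : ∀ x ∈ gr k, π x = x := fun x hx => by
    change ((LinearEquiv.ofBijective (DirectSum.coeLinearMap gr) h).symm x k : M) = x
    rw [h.ofBijective_coeLinearMap_of_mem hx]
  have hπ_ne : ∀ i ≠ k, ∀ x ∈ gr i, π x = 0 := fun i hik x hx => by
    change ((LinearEquiv.ofBijective (DirectSum.coeLinearMap gr) h).symm x k : M) = 0
    rw [h.ofBijective_coeLinearMap_of_mem_ne hik hx, ZeroMemClass.coe_zero]
  have hle : Submodule.span R (⋃ i, S i) ≤ (Submodule.span R (S k)).comap π := by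
    rw [Submodule.span_le, Set.iUnion_subset_iff]
    intro i x hx
    by_cases hik : i = k
    · subst hik
      simpa [hπ_same x (hS i hx)] using Submodule.subset_span hx
    · simp [hπ_ne i hik x (hS i hx)]
  intro x hx
  rw [← hπ_same x hx]
  exact hle (hspan ▸ Submodule.mem_top)

end GradedSpan

theorem LinearMap.exists_comp_eq_of_surjective {R M N P : Type*} [Ring R] [AddCommGroup M]
    [Module R M] [AddCommGroup N] [Module R N] [AddCommGroup P] [Module R P]
    (p : M →ₗ[R] N) (hp : Function.Surjective p) (f : M →ₗ[R] P)
    (h : LinearMap.ker p ≤ LinearMap.ker f) : ∃ g : N →ₗ[R] P, ∀ x, g (p x) = f x :=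
  ⟨(LinearMap.ker p).liftQ f h ∘ₗ (p.quotKerEquivOfSurjective hp).symm.toLinearMap,
    fun x => by simp⟩

namespace DG

universe u

variable {R : Type u} [CommRing R]

@[elab_as_elim]
theorem DGAlg.induction_on {S : DGAlg R} {motive : S.carrier → Prop} (a : S.carrier)
    (mem : ∀ i, ∀ a ∈ S.gr i, motive a) (zero : motive 0)
    (add : ∀ a b, motive a → motive b → motive (a + b)) : motive a :=
  Submodule.iSup_induction (motive := motive) S.gr
    (S.internal.submodule_iSup_eq_top ▸ Submodule.mem_top) mem zero add

theorem DGAlg.eq_zero_of_mem_gr_of_neg (S : DGAlg R) {i : ℤ} {a : S.carrier}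
    (ha : a ∈ S.gr i) (hi : i < 0) : a = 0 := by
  simpa [S.nonneg i hi] using ha

namespace DGHom

variable {S T : DGAlg R} (f : DGHom S T)

theorem map_zero : f.toFun 0 = 0 := _root_.map_zero f.toRingHom

theorem map_sub (a b : S.carrier) : f.toFun (a - b) = f.toFun a - f.toFun b :=
  _root_.map_sub f.toRingHom a b

theorem map_smul (r : R) (a : S.carrier) : f.toFun (r • a) = r • f.toFun a := by
  rw [Algebra.smul_def, f.map_mul, f.map_algebraMap, ← Algebra.smul_def]

end DGHom

namespace DGMod

variable {S : DGAlg R} (M : DGMod S)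

theorem smul_algebra_smul (m : M.carrier) (r : R) (a : S.carrier) :
    M.smul m (r • a) = r • M.smul m a := by
  rw [Algebra.smul_def, M.smul_mul, M.smul_algebraMap, M.smul_rsmul]

def smulLinearMap (a : S.carrier) : M.carrier →ₗ[R] M.carrier where
  toFun m := M.smul m a
  map_add' m m' := M.add_smul m m' a
  map_smul' r m := M.smul_rsmul r m a

def toSpanSingleton (m : M.carrier) : S.carrier →ₗ[R] M.carrier where
  toFun a := M.smul m a
  map_add' := M.smul_add m
  map_smul' r a := M.smul_algebra_smul m r a

theorem zero_smul (a : S.carrier) : M.smul 0 a = 0 := _root_.map_zero (M.smulLinearMap a)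

theorem smul_zero (m : M.carrier) : M.smul m 0 = 0 := _root_.map_zero (M.toSpanSingleton m)

theorem smul_sub (m : M.carrier) (a b : S.carrier) : M.smul m (a - b) = M.smul m a - M.smul m b :=
  _root_.map_sub (M.toSpanSingleton m) a b

end DGMod

namespace EnvSetup

variable (P : EnvSetup R)

def ιJₗ : P.J.carrier →ₗ[R] P.E.carrier where
  toFun := P.ιJ
  map_add' := P.ιJ_add
  map_smul' := P.ιJ_rsmul

@[simp] theorem ιJₗ_apply (x : P.J.carrier) : P.ιJₗ x = P.ιJ x := rfl

theorem ιJ_zsmul (z : ℤ) (x : P.J.carrier) : P.ιJ (z • x) = z • P.ιJ x :=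
  map_zsmul P.ιJₗ z x

theorem mulB_ιJ (x : P.J.carrier) : P.mulB.toFun (P.ιJ x) = 0 :=
  (P.ιJ_range _).mp ⟨x, rfl⟩

theorem span_inl_mul_inr :
    Submodule.span R {e : P.E.carrier | ∃ b b', e = P.inl.toFun b * P.inr.toFun b'} = ⊤ :=
  Submodule.eq_top_iff'.mpr P.span

theorem δ_add (b c : P.B.carrier) : P.δ (b + c) = P.δ b + P.δ c := by
  apply P.ιJ_inj
  rw [P.ιJ_add, P.ιJ_δ, P.ιJ_δ, P.ιJ_δ, P.inl.map_add, P.inr.map_add]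
  abel

theorem δ_smul (r : R) (b : P.B.carrier) : P.δ (r • b) = r • P.δ b := by
  apply P.ιJ_inj
  rw [P.ιJ_rsmul, P.ιJ_δ, P.ιJ_δ, P.inl.map_smul, P.inr.map_smul, smul_sub]

def δₗ : P.B.carrier →ₗ[R] P.J.carrier where
  toFun := P.δ
  map_add' := P.δ_add
  map_smul' := P.δ_smul

theorem δ_zero : P.δ 0 = 0 := map_zero P.δₗ

theorem δ_mem_gr {i : ℤ} {b : P.B.carrier} (hb : b ∈ P.B.gr i) : P.δ b ∈ P.J.gr i := by
  rw [P.ιJ_gr, P.ιJ_δ]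
  exact Submodule.sub_mem _ (P.inl.map_gr hb) (P.inr.map_gr hb)

theorem δ_d (b : P.B.carrier) : P.δ (P.B.d b) = P.J.d (P.δ b) := by
  apply P.ιJ_inj
  rw [P.ιJ_d, P.ιJ_δ, P.ιJ_δ, map_sub, P.inl.map_d, P.inr.map_d]

theorem δ_mul_φ (b : P.B.carrier) (a : P.A.carrier) :
    P.δ (b * P.φ.toFun a) = P.J.smul (P.δ b) (P.inr.toFun (P.φ.toFun a)) := by
  apply P.ιJ_inj
  rw [P.ιJ_smul, P.ιJ_δ, P.ιJ_δ, P.inl.map_mul, P.inr.map_mul, P.inl_inr_phi, sub_mul]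

theorem δ_mul {i j : ℤ} {b c : P.B.carrier} (hb : b ∈ P.B.gr i) (hc : c ∈ P.B.gr j) :
    P.δ (b * c) = P.J.smul (P.δ b) (P.inr.toFun c)
      + sgn (i * j) • P.J.smul (P.δ c) (P.inl.toFun b) := by
  apply P.ιJ_inj
  have hcomm : P.inl.toFun b * (P.inl.toFun c - P.inr.toFun c)
      = sgn (i * j) • ((P.inl.toFun c - P.inr.toFun c) * P.inl.toFun b) :=
    P.E.gcomm (P.inl.map_gr hb) (Submodule.sub_mem _ (P.inl.map_gr hc) (P.inr.map_gr hc))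
  rw [P.ιJ_add, P.ιJ_zsmul, P.ιJ_smul, P.ιJ_smul, P.ιJ_δ, P.ιJ_δ, P.ιJ_δ,
    ← hcomm, P.inl.map_mul, P.inr.map_mul]
  noncomm_ring

theorem span_δ_smul_inr :
    Submodule.span R {x : P.J.carrier | ∃ b c, x = P.J.smul (P.δ b) (P.inr.toFun c)} = ⊤ := by
  set W := Submodule.span R {x : P.J.carrier | ∃ b c, x = P.J.smul (P.δ b) (P.inr.toFun c)}
  -- `e ↦ e - 1 ⊗ π_B(e)` retracts `Bᵉ` onto `J` and sends `b ⊗ c` to `δ(b)(1 ⊗ c)`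
  have hretract : ∀ e, e - P.inr.toFun (P.mulB.toFun e) ∈ W.map P.ιJₗ := by
    intro e
    induction P.span e using Submodule.span_induction with
    | mem _ he =>
      obtain ⟨b, c, rfl⟩ := he
      refine ⟨_, Submodule.subset_span ⟨b, c, rfl⟩, ?_⟩
      rw [ιJₗ_apply, P.ιJ_smul, P.ιJ_δ, P.mulB.map_mul, P.mulB_inl, P.mulB_inr,
        P.inr.map_mul, sub_mul]
    | zero => simp [P.mulB.map_zero, P.inr.map_zero]
    | add e e' _ _ he he' =>
      rw [P.mulB.map_add, P.inr.map_add, add_sub_add_comm]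
      exact Submodule.add_mem _ he he'
    | smul r e _ he =>
      rw [P.mulB.map_smul, P.inr.map_smul, ← smul_sub]
      exact Submodule.smul_mem _ r he
  refine Submodule.eq_top_iff'.mpr fun x => ?_
  obtain ⟨y, hy, hyx⟩ := hretract (P.ιJ x)
  rw [P.mulB_ιJ, P.inr.map_zero, sub_zero] at hyx
  rwa [← P.ιJ_inj hyx]

def AnnihilatedByJ (X : DGMod P.E) : Prop :=
  ∀ (x : X.carrier) (e : P.E.carrier), P.mulB.toFun e = 0 → X.smul x e = 0

variable {P}

theorem AnnihilatedByJ.smul_inl {X : DGMod P.E} (hX : P.AnnihilatedByJ X) (x : X.carrier)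
    (b : P.B.carrier) : X.smul x (P.inl.toFun b) = X.smul x (P.inr.toFun b) := by
  rw [← sub_eq_zero, ← X.smul_sub]
  exact hX x _ (by rw [P.mulB.map_sub, P.mulB_inl, P.mulB_inr, sub_self])

end EnvSetup

section DerivationLift

variable {P : EnvSetup R} {X : DGMod P.E} {n : ℤ} {D : P.B.carrier → X.carrier}

theorem IsDer.map_zero (hD : IsDer P X n D) : D 0 = 0 := by
  simpa using hD.2.1 0 0

theorem IsDer.map_one (hD : IsDer P X n D) : D 1 = 0 := by
  have h := hD.2.2.2.2 0 0 1 1 P.B.one_mem P.B.one_mem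
  rw [one_mul, P.inr.map_one, P.inl.map_one, X.smul_one, show sgn (0 * 0) = 1 by simp [sgn],
    one_smul] at h
  exact left_eq_add.mp h

def IsDerLift (D : P.B.carrier → X.carrier) (H : P.E.carrier →ₗ[R] X.carrier) : Prop :=
  ∀ b b', H (P.inl.toFun b * P.inr.toFun b') = X.smul (D b) (P.inr.toFun b')

theorem IsDer.exists_isDerLift (hD : IsDer P X n D) : ∃ H, IsDerLift D H := by
  obtain ⟨H, hH, -⟩ := P.univ X.carrier (fun b b' => X.smul (D b) (P.inr.toFun b'))
    (fun b₁ b₂ b' => by rw [hD.1, X.add_smul])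
    (fun b b₁ b₂ => by rw [P.inr.map_add, X.smul_add])
    (fun r b b' => by rw [hD.2.1, X.smul_rsmul])
    (fun r b b' => by rw [P.inr.map_smul, X.smul_algebra_smul])
    (fun a b b' => by rw [hD.2.2.1, P.inr.map_mul, X.smul_mul])
  exact ⟨H, hH⟩

variable {H : P.E.carrier →ₗ[R] X.carrier}

theorem IsDerLift.map_mul_inr (hH : IsDerLift D H) (e : P.E.carrier) (c : P.B.carrier) :
    H (e * P.inr.toFun c) = X.smul (H e) (P.inr.toFun c) := by
  have hext :
      H ∘ₗ LinearMap.mulRight R (P.inr.toFun c) = X.smulLinearMap (P.inr.toFun c) ∘ₗ H := by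
    refine LinearMap.ext_on P.span_inl_mul_inr ?_
    rintro _ ⟨b, b', rfl⟩
    simp only [LinearMap.comp_apply, LinearMap.mulRight_apply, DGMod.smulLinearMap,
      LinearMap.coe_mk, AddHom.coe_mk, mul_assoc, ← P.inr.map_mul]
    rw [hH, hH, P.inr.map_mul, X.smul_mul]
  exact LinearMap.congr_fun hext e

theorem IsDerLift.map_inl_sub_inr (hH : IsDerLift D H) (hD : IsDer P X n D) (b : P.B.carrier) :
    H (P.inl.toFun b - P.inr.toFun b) = D b := by
  have hl : P.inl.toFun b = P.inl.toFun b * P.inr.toFun 1 := by rw [P.inr.map_one, mul_one]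
  have hr : P.inr.toFun b = P.inl.toFun 1 * P.inr.toFun b := by rw [P.inl.map_one, one_mul]
  rw [map_sub, hl, hr, hH, hH, hD.map_one, X.zero_smul, P.inr.map_one, X.smul_one, sub_zero]

theorem IsDerLift.map_inl_sub_inr_mul_inl_of_mem (hH : IsDerLift D H) (hD : IsDer P X n D)
    (hX : P.AnnihilatedByJ X) {i j : ℤ} {b c : P.B.carrier} (hb : b ∈ P.B.gr i)
    (hc : c ∈ P.B.gr j) :
    H ((P.inl.toFun b - P.inr.toFun b) * P.inl.toFun c) = X.smul (D b) (P.inl.toFun c) := by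
  have hcomm : P.inr.toFun b * P.inl.toFun c = sgn (i * j) • (P.inl.toFun c * P.inr.toFun b) :=
    P.E.gcomm (P.inr.map_gr hb) (P.inl.map_gr hc)
  have hinl : P.inl.toFun b * P.inl.toFun c = P.inl.toFun (b * c) * P.inr.toFun 1 := by
    rw [P.inr.map_one, mul_one, P.inl.map_mul]
  -- the term `±D(c)(b ⊗ 1)` of the Leibniz rule cancels `H(±c ⊗ b)` because `XJ = 0`
  rw [sub_mul, hcomm, hinl, map_sub, map_zsmul, hH, hH, P.inr.map_one, X.smul_one,
    hD.2.2.2.2 i j b c hb hc, hX.smul_inl, hX.smul_inl, add_sub_cancel_right]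

theorem IsDerLift.map_inl_sub_inr_mul_inl (hH : IsDerLift D H) (hD : IsDer P X n D)
    (hX : P.AnnihilatedByJ X) (b c : P.B.carrier) :
    H ((P.inl.toFun b - P.inr.toFun b) * P.inl.toFun c) = X.smul (D b) (P.inl.toFun c) := by
  induction b using DGAlg.induction_on generalizing c with
  | mem i b hb =>
    induction c using DGAlg.induction_on with
    | mem j c hc => exact hH.map_inl_sub_inr_mul_inl_of_mem hD hX hb hc
    | zero => rw [P.inl.map_zero, mul_zero, _root_.map_zero, X.smul_zero]
    | add c c' h h' => rw [P.inl.map_add, mul_add, map_add, h, h', X.smul_add]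
  | zero => rw [P.inl.map_zero, P.inr.map_zero, sub_zero, zero_mul, _root_.map_zero,
      hD.map_zero, X.zero_smul]
  | add b b' h h' =>
    rw [P.inl.map_add, P.inr.map_add, add_sub_add_comm, add_mul, map_add, h, h', hD.1,
      X.add_smul]

theorem IsDerLift.map_inl_sub_inr_mul (hH : IsDerLift D H) (hD : IsDer P X n D)
    (hX : P.AnnihilatedByJ X) (b : P.B.carrier) (e : P.E.carrier) :
    H ((P.inl.toFun b - P.inr.toFun b) * e) = X.smul (D b) e := by
  have hext : H ∘ₗ LinearMap.mulLeft R (P.inl.toFun b - P.inr.toFun b)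
      = X.toSpanSingleton (D b) := by
    refine LinearMap.ext_on P.span_inl_mul_inr ?_
    rintro _ ⟨c, c', rfl⟩
    simp only [LinearMap.comp_apply, LinearMap.mulLeft_apply, DGMod.toSpanSingleton,
      LinearMap.coe_mk, AddHom.coe_mk, ← mul_assoc, hH.map_mul_inr,
      hH.map_inl_sub_inr_mul_inl hD hX, X.smul_mul]
  exact LinearMap.congr_fun hext e

theorem IsDerLift.map_ιJ_mul (hH : IsDerLift D H) (hD : IsDer P X n D)
    (hX : P.AnnihilatedByJ X) (x : P.J.carrier) (e : P.E.carrier) :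
    H (P.ιJ x * e) = X.smul (H (P.ιJ x)) e := by
  have hext : H ∘ₗ LinearMap.mulRight R e ∘ₗ P.ιJₗ = X.smulLinearMap e ∘ₗ H ∘ₗ P.ιJₗ := by
    refine LinearMap.ext_on P.span_δ_smul_inr ?_
    rintro _ ⟨b, c, rfl⟩
    simp only [LinearMap.comp_apply, LinearMap.mulRight_apply, DGMod.smulLinearMap,
      LinearMap.coe_mk, AddHom.coe_mk, EnvSetup.ιJₗ_apply, P.ιJ_smul, P.ιJ_δ, mul_assoc,
      hH.map_inl_sub_inr_mul hD hX, X.smul_mul]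
  exact LinearMap.congr_fun hext x

theorem IsDerLift.map_ιJ_mul_ιJ (hH : IsDerLift D H) (hD : IsDer P X n D)
    (hX : P.AnnihilatedByJ X) (u v : P.J.carrier) : H (P.ιJ u * P.ιJ v) = 0 := by
  rw [hH.map_ιJ_mul hD hX]
  exact hX _ _ (P.mulB_ιJ v)

end DerivationLift

namespace OmegaSetup

variable (Q : OmegaSetup R)

def pOmₗ : Q.env.J.carrier →ₗ[R] Q.Ω.carrier where
  toFun := Q.pOm
  map_add' := Q.pOm_add
  map_smul' := Q.pOm_rsmul

theorem pOm_zsmul (z : ℤ) (x : Q.env.J.carrier) : Q.pOm (z • x) = z • Q.pOm x :=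
  map_zsmul Q.pOmₗ z x

theorem pOm_smul_inr (x : Q.env.J.carrier) (c : Q.env.B.carrier) :
    Q.pOm (Q.env.J.smul x (Q.env.inr.toFun c)) = Q.Ω.smul (Q.pOm x) c := by
  rw [Q.pOm_smul, Q.env.mulB_inr]

theorem δbar_zero : Q.δbar 0 = 0 := by
  rw [δbar, Q.env.δ_zero]; exact map_zero Q.pOmₗ

theorem δbar_add (b c : Q.env.B.carrier) : Q.δbar (b + c) = Q.δbar b + Q.δbar c := by
  rw [δbar, Q.env.δ_add, Q.pOm_add]; rfl

theorem δbar_smul (r : R) (b : Q.env.B.carrier) : Q.δbar (r • b) = r • Q.δbar b := by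
  rw [δbar, Q.env.δ_smul, Q.pOm_rsmul]; rfl

theorem δbar_mem_gr {i : ℤ} {b : Q.env.B.carrier} (hb : b ∈ Q.env.B.gr i) :
    Q.δbar b ∈ Q.Ω.gr i :=
  Q.pOm_gr (Q.env.δ_mem_gr hb)

theorem δbar_d (b : Q.env.B.carrier) : Q.δbar (Q.env.B.d b) = Q.Ω.d (Q.δbar b) := by
  rw [δbar, Q.env.δ_d, Q.pOm_d]; rfl

theorem δbar_mul_φ (b : Q.env.B.carrier) (a : Q.env.A.carrier) :
    Q.δbar (b * Q.env.φ.toFun a) = Q.Ω.smul (Q.δbar b) (Q.env.φ.toFun a) := by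
  rw [δbar, Q.env.δ_mul_φ, Q.pOm_smul_inr]; rfl

theorem δbar_mul {i j : ℤ} {b c : Q.env.B.carrier} (hb : b ∈ Q.env.B.gr i)
    (hc : c ∈ Q.env.B.gr j) :
    Q.δbar (b * c) = Q.Ω.smul (Q.δbar b) c + sgn (i * j) • Q.Ω.smul (Q.δbar c) b := by
  rw [δbar, Q.env.δ_mul hb hc, Q.pOm_add, Q.pOm_zsmul, Q.pOm_smul, Q.pOm_smul,
    Q.env.mulB_inr, Q.env.mulB_inl]
  rfl

theorem span_δbar_smul :
    Submodule.span R {w : Q.Ω.carrier | ∃ b c, w = Q.Ω.smul (Q.δbar b) c} = ⊤ := by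
  refine Submodule.eq_top_iff'.mpr fun w => ?_
  obtain ⟨x, rfl⟩ := Q.pOm_surj w
  have hx := Submodule.mem_map_of_mem (f := Q.pOmₗ)
    (Q.env.span_δ_smul_inr ▸ Submodule.mem_top : x ∈ _)
  rw [Submodule.map_span] at hx
  refine Submodule.span_mono ?_ hx
  rintro _ ⟨_, ⟨b, c, rfl⟩, rfl⟩
  exact ⟨b, c, Q.pOm_smul_inr _ _⟩

theorem mem_span_of_mem_gr {k : ℤ} {w : Q.Ω.carrier} (hw : w ∈ Q.Ω.gr k) :
    w ∈ Submodule.span R {w | ∃ (i j : ℤ) (b c : Q.env.B.carrier), b ∈ Q.env.B.gr i ∧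
      c ∈ Q.env.B.gr j ∧ i + j = k ∧ w = Q.Ω.smul (Q.δbar b) c} := by
  set S : ℤ → Set Q.Ω.carrier := fun k => {w | ∃ (i j : ℤ) (b c : Q.env.B.carrier),
    b ∈ Q.env.B.gr i ∧ c ∈ Q.env.B.gr j ∧ i + j = k ∧ w = Q.Ω.smul (Q.δbar b) c}
  have hS : ∀ k, S k ⊆ Q.Ω.gr k := by
    rintro _ _ ⟨i, j, b, c, hb, hc, rfl, rfl⟩
    exact Q.Ω.smul_mem (Q.δbar_mem_gr hb) hc
  have hmem : ∀ b c, Q.Ω.smul (Q.δbar b) c ∈ Submodule.span R (⋃ k, S k) := by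
    intro b c
    induction b using DGAlg.induction_on generalizing c with
    | mem i b hb =>
      induction c using DGAlg.induction_on with
      | mem j c hc =>
        exact Submodule.subset_span (Set.mem_iUnion.mpr ⟨_, i, j, b, c, hb, hc, rfl, rfl⟩)
      | zero => rw [Q.Ω.smul_zero]; exact Submodule.zero_mem _
      | add c c' h h' => rw [Q.Ω.smul_add]; exact Submodule.add_mem _ h h'
    | zero => rw [Q.δbar_zero, Q.Ω.zero_smul]; exact Submodule.zero_mem _
    | add b b' h h' => rw [Q.δbar_add, Q.Ω.add_smul]; exact Submodule.add_mem _ (h c) (h' c)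
  have hspan : Submodule.span R (⋃ k, S k) = ⊤ := by
    rw [eq_top_iff, ← Q.span_δbar_smul, Submodule.span_le]
    rintro _ ⟨b, c, rfl⟩
    exact hmem b c
  exact Q.Ω.internal.le_span_of_span_iUnion_eq_top hS hspan k hw

end OmegaSetup

section HomOmega

variable {S : DGAlg R} {M N : DGMod S} {g : M.carrier → N.carrier}

theorem InSHom.isLinearMap (hg : InSHom M N g) : IsLinearMap R g := by
  obtain ⟨s, gs, hgs, hsum⟩ := hg
  refine ⟨fun x y => ?_, fun r x => ?_⟩
  · rw [hsum, hsum, hsum, ← Finset.sum_add_distrib]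
    exact Finset.sum_congr rfl fun n hn => (hgs n hn).1 x y
  · rw [hsum, hsum, Finset.smul_sum]
    exact Finset.sum_congr rfl fun n hn => (hgs n hn).2.1 r x

theorem InSHom.map_smul_right (hg : InSHom M N g) (x : M.carrier) (a : S.carrier) :
    g (M.smul x a) = N.smul (g x) a := by
  obtain ⟨s, gs, hgs, hsum⟩ := hg
  rw [hsum, hsum]
  exact (Finset.sum_congr rfl fun n hn => (hgs n hn).2.2.1 x a).trans
    (map_sum (N.smulLinearMap a) _ s).symm

def InSHom.toLinearMap (hg : InSHom M N g) : M.carrier →ₗ[R] N.carrier :=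
  IsLinearMap.mk' g hg.isLinearMap

variable {Q : OmegaSetup R} {X : DGMod Q.env.E}

theorem isDer_comp_δbar (hX : Q.env.AnnihilatedByJ X) {n : ℤ} {g : Q.Ω.carrier → X.carrier}
    (hg : IsGLin Q.Ω (Q.env.toBMod X) n g) : IsDer Q.env X n (fun b => g (Q.δbar b)) := by
  obtain ⟨hadd, hsmul, hsmul_right, hgr⟩ := hg
  have hzsmul (z : ℤ) (w : Q.Ω.carrier) : g (z • w) = z • g w :=
    map_zsmul (IsLinearMap.mk' g ⟨hadd, hsmul⟩) z w
  refine ⟨fun b c => ?_, fun r b => ?_, fun b a => ?_, fun i b hb => hgr i _ (Q.δbar_mem_gr hb),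
    fun i j b c hb hc => ?_⟩
  · exact (congrArg g (Q.δbar_add b c)).trans (hadd _ _)
  · exact (congrArg g (Q.δbar_smul r b)).trans (hsmul _ _)
  · exact (congrArg g (Q.δbar_mul_φ b a)).trans (hsmul_right _ _)
  · dsimp only
    rw [Q.δbar_mul hb hc, hadd, hzsmul, hsmul_right, hsmul_right, hX.smul_inl]; rfl

theorem exists_isGLin_comp_δbar_eq (hX : Q.env.AnnihilatedByJ X) {n : ℤ}
    {D : Q.env.B.carrier → X.carrier} (hD : IsDer Q.env X n D) :
    ∃ g : Q.Ω.carrier → X.carrier, IsGLin Q.Ω (Q.env.toBMod X) n g ∧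
      ∀ b, D b = g (Q.δbar b) := by
  obtain ⟨H, hH⟩ := hD.exists_isDerLift
  have hker : LinearMap.ker Q.pOmₗ ≤ LinearMap.ker (H ∘ₗ Q.env.ιJₗ) := by
    intro x hx
    have hJ2 := (Q.pOm_ker x).mp hx
    refine (Submodule.span_le (p := LinearMap.ker H)).mpr ?_ hJ2
    rintro _ ⟨u, v, rfl⟩
    exact hH.map_ιJ_mul_ιJ hD hX u v
  obtain ⟨g, hg⟩ :
      ∃ g : Q.Ω.carrier →ₗ[R] X.carrier, ∀ x, g (Q.pOm x) = H (Q.env.ιJ x) :=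
    LinearMap.exists_comp_eq_of_surjective Q.pOmₗ Q.pOm_surj _ hker
  have hgδ (b : Q.env.B.carrier) : g (Q.δbar b) = D b := by
    rw [OmegaSetup.δbar, hg, Q.env.ιJ_δ, hH.map_inl_sub_inr hD]
  have hgsmul (w : Q.Ω.carrier) (c : Q.env.B.carrier) :
      g (Q.Ω.smul w c) = X.smul (g w) (Q.env.inr.toFun c) := by
    obtain ⟨x, rfl⟩ := Q.pOm_surj w
    rw [← Q.pOm_smul_inr, hg, hg, Q.env.ιJ_smul, hH.map_mul_inr]
  refine ⟨g, ⟨g.map_add, g.map_smul, hgsmul, fun k w hw => ?_⟩, fun b => (hgδ b).symm⟩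
  refine (Submodule.span_le (p := (X.gr (k + n)).comap g)).mpr ?_ (Q.mem_span_of_mem_gr hw)
  rintro _ ⟨i, j, b, c, hb, hc, rfl, rfl⟩
  have hmem := X.smul_mem (hD.2.2.2.1 i b hb) (Q.env.inr.map_gr hc)
  rw [add_right_comm] at hmem
  simpa [hgsmul, hgδ] using hmem

theorem inSDer_comp_δbar (hX : Q.env.AnnihilatedByJ X) {g : Q.Ω.carrier → X.carrier}
    (hg : InSHom Q.Ω (Q.env.toBMod X) g) : InSDer Q.env X (fun b => g (Q.δbar b)) := by
  obtain ⟨s, gs, hgs, hsum⟩ := hg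
  exact ⟨s, fun n b => gs n (Q.δbar b), fun n hn => isDer_comp_δbar hX (hgs n hn),
    fun b => hsum (Q.δbar b)⟩

theorem exists_inSHom_comp_δbar_eq (hX : Q.env.AnnihilatedByJ X)
    {D : Q.env.B.carrier → X.carrier} (hD : InSDer Q.env X D) :
    ∃ g : Q.Ω.carrier → X.carrier, InSHom Q.Ω (Q.env.toBMod X) g ∧
      ∀ b, D b = g (Q.δbar b) := by
  obtain ⟨s, Ds, hDs, hsum⟩ := hD
  choose! gs hgs using fun n hn => exists_isGLin_comp_δbar_eq hX (hDs n hn)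
  exact ⟨fun w => ∑ n ∈ s, gs n w, ⟨s, gs, fun n hn => (hgs n hn).1, fun _ => rfl⟩,
    fun b => (hsum b).trans (Finset.sum_congr rfl fun n hn => (hgs n hn).2 b)⟩

theorem InSHom.eq_of_comp_δbar_eq {g g' : Q.Ω.carrier → X.carrier}
    (hg : InSHom Q.Ω (Q.env.toBMod X) g) (hg' : InSHom Q.Ω (Q.env.toBMod X) g')
    (h : ∀ b, g (Q.δbar b) = g' (Q.δbar b)) : g = g' := by
  have hext : hg.toLinearMap = hg'.toLinearMap := by
    refine LinearMap.ext_on Q.span_δbar_smul ?_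
    rintro _ ⟨b, c, rfl⟩
    change g _ = g' _
    rw [hg.map_smul_right, hg'.map_smul_right, h]
  exact congrArg DFunLike.coe hext

theorem InSHom.eq_zero_of_comp_δbar_eq_zero {g : Q.Ω.carrier → X.carrier}
    (hg : InSHom Q.Ω (Q.env.toBMod X) g) {n : ℤ}
    (h : ∀ k ≤ n, ∀ b ∈ Q.env.B.gr k, g (Q.δbar b) = 0) {k : ℤ} (hk : k ≤ n)
    {w : Q.Ω.carrier} (hw : w ∈ Q.Ω.gr k) : g w = 0 := by
  refine (Submodule.span_le (p := LinearMap.ker hg.toLinearMap)).mpr ?_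
    (Q.mem_span_of_mem_gr hw)
  rintro _ ⟨i, j, b, c, hb, hc, rfl, rfl⟩
  rcases lt_or_ge j 0 with hj | hj
  · simp [Q.env.B.eq_zero_of_mem_gr_of_neg hc hj, Q.Ω.smul_zero]
  · change g _ = 0
    rw [hg.map_smul_right, h i (by omega) b hb]
    exact X.zero_smul _

end HomOmega

/-- Let `X` be a DG `Bᵉ`-module with `XJ = 0` (so `X` is a DG
`B`-module via `B ≅ Bᵉ/J`).  Then the map `g ↦ g ∘ δ̄` is an isomorphism
`Hom_B(Ω, X) ≅ Der_A(B, X)` of topological DG `B`-modules, where `Ω = J/J²` and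
`δ̄ : B → Ω` is induced by the universal derivation `δ`. -/
theorem der_iso_hom_omega {R : Type u} [CommRing R] (Q : OmegaSetup R)
    (X : DGMod Q.env.E)
    (hXJ : ∀ (x : X.carrier) (ee : Q.env.E.carrier),
      Q.env.mulB.toFun ee = 0 → X.smul x ee = 0) :
    -- g ↦ g ∘ δ̄ sends graded B-linear maps of degree n to A-derivations of degree n
    (∀ (n : ℤ) (g : Q.Ω.carrier → X.carrier),
      IsGLin Q.Ω (Q.env.toBMod X) n g → IsDer Q.env X n (fun b => g (Q.δbar b))) ∧
    (∀ g : Q.Ω.carrier → X.carrier, InSHom Q.Ω (Q.env.toBMod X) g →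
      InSDer Q.env X (fun b => g (Q.δbar b))) ∧
    -- injective
    (∀ g g' : Q.Ω.carrier → X.carrier, InSHom Q.Ω (Q.env.toBMod X) g →
      InSHom Q.Ω (Q.env.toBMod X) g' → (∀ b, g (Q.δbar b) = g' (Q.δbar b)) → g = g') ∧
    -- surjective
    (∀ D : Q.env.B.carrier → X.carrier, InSDer Q.env X D →
      ∃ g : Q.Ω.carrier → X.carrier, InSHom Q.Ω (Q.env.toBMod X) g ∧
        ∀ b, D b = g (Q.δbar b)) ∧
    -- intertwines the differentials: ∂^Der(g ∘ δ̄) = (∂^Hom g) ∘ δ̄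
    (∀ (n : ℤ) (g : Q.Ω.carrier → X.carrier), IsGLin Q.Ω (Q.env.toBMod X) n g →
      (fun b => X.d (g (Q.δbar b)) - sgn n • g (Q.δbar (Q.env.B.d b)))
        = (fun b => X.d (g (Q.δbar b)) - sgn n • g (Q.Ω.d (Q.δbar b)))) ∧
    -- continuous
    (∀ n : ℤ, ∃ m : ℤ, ∀ g : Q.Ω.carrier → X.carrier, InSHom Q.Ω (Q.env.toBMod X) g →
      (∀ k : ℤ, k ≤ m → ∀ w ∈ Q.Ω.gr k, g w = 0) →
      ∀ k : ℤ, k ≤ n → ∀ b ∈ Q.env.B.gr k, g (Q.δbar b) = 0) ∧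
    -- with continuous inverse
    (∀ n : ℤ, ∃ m : ℤ, ∀ g : Q.Ω.carrier → X.carrier, InSHom Q.Ω (Q.env.toBMod X) g →
      (∀ k : ℤ, k ≤ m → ∀ b ∈ Q.env.B.gr k, g (Q.δbar b) = 0) →
      ∀ k : ℤ, k ≤ n → ∀ w ∈ Q.Ω.gr k, g w = 0) :=
  ⟨fun _ _ hg => isDer_comp_δbar hXJ hg,
    fun _ hg => inSDer_comp_δbar hXJ hg,
    fun _ _ hg hg' h => hg.eq_of_comp_δbar_eq hg' h,
    fun _ hD => exists_inSHom_comp_δbar_eq hXJ hD,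
    fun _ _ _ => funext fun b => by rw [Q.δbar_d],
    fun n => ⟨n, fun _ _ h k hk _ hb => h k hk _ (Q.δbar_mem_gr hb)⟩,
    fun n => ⟨n, fun _ hg h _ hk _ hw => hg.eq_zero_of_comp_δbar_eq_zero h hk hw⟩⟩

end DG
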